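/- Let Σ be a nonempty finite type and P : Set (ℕ → Σ) a boolean property. Then P is classically monitorable, i.e., for every finite trace s there exists a finite trace r such that s ++ r positively determines P or s ++ r negatively determines P, if and only if there exists a function v : List Σ → Option Bool such that: (monotonicity) for all finite traces s, t with s a prefix of t and all b : Bool, v s = some b implies v t = some b; (soundness) for every infinite trace f, every n : ℕ, and every b : Bool, v (f↾n) = some b implies (f ∈ P ↔ b = true); and (existential reachability) for every finite trace s there exist an infinite trace f and n : ℕ with v ((s·f)↾n) ≠ none. -/
import Mathlib

/-- The length-`n` prefix of an infinite trace `f`. -/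
def pref {A : Type*} (f : ℕ → A) (n : ℕ) : List A := List.ofFn (fun i : Fin n => f i.1)

/-- The infinite trace obtained by prepending the finite trace `s` to the infinite trace `f`. -/
def ext {A : Type*} (s : List A) (f : ℕ → A) : ℕ → A :=
  fun n => if h : n < s.length then s.get ⟨n, h⟩ else f (n - s.length)

/-- `s` positively determines `P`. -/
def PosDet {A : Type*} (P : Set (ℕ → A)) (s : List A) : Prop := ∀ f : ℕ → A, ext s f ∈ P

/-- `s` negatively determines `P`. -/
def NegDet {A : Type*} (P : Set (ℕ → A)) (s : List A) : Prop := ∀ f : ℕ → A, ext s f ∉ P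

lemma ext_append {A : Type*} (s r : List A) (f : ℕ → A) :
    ext (s ++ r) f = ext s (ext r f) := by
  funext n
  unfold ext
  simp only [List.length_append, List.get_eq_getElem]
  by_cases h1 : n < s.length
  · rw [dif_pos (by omega), dif_pos h1, List.getElem_append_left h1]
  · by_cases h2 : n < s.length + r.length
    · rw [dif_pos h2, dif_neg h1, dif_pos (by omega),
        List.getElem_append_right (by omega)]
    · rw [dif_neg h2, dif_neg h1, dif_neg (by omega)]
      congr 1; omega

lemma pref_length {A : Type*} (f : ℕ → A) (n : ℕ) : (pref f n).length = n := by
  simp [pref]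

lemma pref_getElem {A : Type*} (f : ℕ → A) (n i : ℕ) (h : i < (pref f n).length) :
    (pref f n)[i] = f i := by
  simp [pref]

lemma ext_pref_shift {A : Type*} (f : ℕ → A) (n : ℕ) :
    ext (pref f n) (fun k => f (n + k)) = f := by
  funext k
  unfold ext
  by_cases h : k < (pref f n).length
  · simp only [dif_pos h, List.get_eq_getElem, pref_getElem]
  · rw [dif_neg h]
    rw [pref_length] at h
    simp only [pref_length]
    congr 1
    omega

lemma pref_ext_ge {A : Type*} (s : List A) (f : ℕ → A) (n : ℕ) (h : s.length ≤ n) :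
    pref (ext s f) n = s ++ pref f (n - s.length) := by
  apply List.ext_getElem
  · simp [pref_length]; omega
  · intro i h1 h2
    rw [pref_getElem]
    by_cases hi : i < s.length
    · rw [List.getElem_append_left hi]
      simp [ext, hi]
    · rw [List.getElem_append_right (by omega), pref_getElem]
      simp [ext, hi]

lemma pref_ext_le {A : Type*} (s : List A) (f : ℕ → A) (n : ℕ) (h : n ≤ s.length) :
    pref (ext s f) n = s.take n := by
  apply List.ext_getElem
  · simp [pref_length]; omega
  · intro i h1 h2
    rw [pref_getElem, List.getElem_take]
    have : i < s.length := by rw [pref_length] at h1; omega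
    simp [ext, this]

lemma pref_ext_self {A : Type*} (s : List A) (f : ℕ → A) :
    pref (ext s f) s.length = s := by
  rw [pref_ext_ge s f _ le_rfl]
  simp [pref]

theorem classically_monitorable_iff {A : Type*} [Fintype A] [Nonempty A]
    (P : Set (ℕ → A)) :
    (∀ s : List A, ∃ r : List A, PosDet P (s ++ r) ∨ NegDet P (s ++ r)) ↔
    (∃ v : List A → Option Bool,
      (∀ s t : List A, s <+: t → ∀ b : Bool, v s = some b → v t = some b) ∧
      (∀ (f : ℕ → A) (n : ℕ) (b : Bool), v (pref f n) = some b → (f ∈ P ↔ b = true)) ∧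
      (∀ s : List A, ∃ (f : ℕ → A) (n : ℕ), v (pref (ext s f) n) ≠ none)) := by
  classical
  constructor
  · intro hmon
    refine ⟨fun s => if PosDet P s then some true else if NegDet P s then some false else none,
      ?_, ?_, ?_⟩
    · rintro s t ⟨r, rfl⟩ b hb
      dsimp only at hb ⊢
      split_ifs at hb with hp hn
      · have : PosDet P (s ++ r) := fun f => by
          rw [ext_append]; exact hp _
        simp [this, ← hb]
      · have : NegDet P (s ++ r) := fun f => by
          rw [ext_append]; exact hn _
        have hnp : ¬ PosDet P (s ++ r) := by
          intro hpos
          obtain ⟨g⟩ : Nonempty (ℕ → A) := ⟨fun _ => Classical.arbitrary A⟩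
          exact this g (hpos g)
        simp [hnp, this, ← hb]
    · intro f n b hb
      dsimp only at hb
      split_ifs at hb with hp hn
    -- cases on b
      · cases hb
        have := hp (fun k => f (n + k))
        rw [ext_pref_shift] at this
        simp [this]
      · cases hb
        have := hn (fun k => f (n + k))
        rw [ext_pref_shift] at this
        simp [this]
    · intro s
      obtain ⟨r, hr⟩ := hmon s
      refine ⟨ext r (fun _ => Classical.arbitrary A), (s ++ r).length, ?_⟩
      rw [← ext_append, pref_ext_self]
      rcases hr with h | h
      · simp [h]
      · have hnp : ¬ PosDet P (s ++ r) := by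
          intro hpos
          exact h (fun _ => Classical.arbitrary A) (hpos _)
        simp [hnp, h]
  · rintro ⟨v, hmono, hsound, hreach⟩ s
    obtain ⟨f, n, hne⟩ := hreach s
    obtain ⟨b, hb⟩ : ∃ b, v (pref (ext s f) n) = some b := by
      cases h : v (pref (ext s f) n) with
      | none => exact absurd h hne
      | some b => exact ⟨b, rfl⟩
    refine ⟨pref f (n - s.length), ?_⟩
    have hvb : v (s ++ pref f (n - s.length)) = some b := by
      by_cases h : s.length ≤ n
      · rw [← pref_ext_ge s f n h]; exact hb
      · push_neg at h
        have h0 : n - s.length = 0 := by omega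
        rw [h0]
        simp only [pref, Fin.isValue]
        rw [List.ofFn_zero, List.append_nil]
        refine hmono _ _ ?_ b hb
        rw [pref_ext_le s f n h.le]
        exact List.take_prefix n s
    have key : ∀ g : ℕ → A, ext (s ++ pref f (n - s.length)) g ∈ P ↔ b = true := by
      intro g
      apply hsound _ (s ++ pref f (n - s.length)).length
      rw [pref_ext_self]
      exact hvb
    cases b with
    | true => exact Or.inl (fun g => (key g).mpr rfl)
    | false => exact Or.inr (fun g h => by simpa using (key g).mp h)
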